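/- Fix integers p ≥ 1 and n ≥ 1 and reals w₁ ≥ 0, w₂ > 0, and 0 < δ ≤ c. Then there exists a constant B ∈ ℝ, depending only on p, n, w₁, w₂, δ and c, such that for all data points x₁, …, xₙ ∈ ℝ^p, all mixture weights π₁, π₂ ≥ 0 with π₁ + π₂ = 1, all means μ₁, μ₂ ∈ ℝ^p, and all symmetric positive definite p×p real matrices Σ₁, Σ₂ with det Σ₁ ≤ det Σ₂, with all eigenvalues of Σ₁ and Σ₂ at most c, and with all eigenvalues of Σ₂ at least δ, the penalized SIA objective satisfies M ≤ B. In particular, the penalized objective remains bounded above as det Σ₁ → 0. -/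

import Mathlib

open Matrix Real

/-- Multivariate Gaussian density
`N(x; μ, S) = (2π)^{-p/2} (det S)^{-1/2} exp(-(1/2)(x-μ)ᵀ S⁻¹ (x-μ))`. -/
noncomputable def gaussDensity {p : ℕ} (x μ : Fin p → ℝ) (S : Matrix (Fin p) (Fin p) ℝ) : ℝ :=
  (2 * Real.pi) ^ (-(p : ℝ) / 2) * S.det ^ (-(1 : ℝ) / 2) *
    Real.exp (-(1 / 2) * ((x - μ) ⬝ᵥ (S⁻¹ *ᵥ (x - μ))))

/-- Closed form of the KL divergence between the Gaussians `N(μ₁, S₁)` and `N(μ₂, S₂)`. -/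
noncomputable def gaussKL {p : ℕ} (μ₁ : Fin p → ℝ) (S₁ : Matrix (Fin p) (Fin p) ℝ)
    (μ₂ : Fin p → ℝ) (S₂ : Matrix (Fin p) (Fin p) ℝ) : ℝ :=
  (1 / 2) * (Real.log (S₂.det / S₁.det) - p + (S₂⁻¹ * S₁).trace +
    (μ₂ - μ₁) ⬝ᵥ (S₂⁻¹ *ᵥ (μ₂ - μ₁)))

/-- The penalized SIA objective for a two-component Gaussian mixture. -/
noncomputable def siaObj {p n : ℕ} (x : Fin n → Fin p → ℝ) (π₁ π₂ : ℝ)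
    (μ₁ μ₂ : Fin p → ℝ) (S₁ S₂ : Matrix (Fin p) (Fin p) ℝ) (w₁ w₂ : ℝ) : ℝ :=
  (∑ i, Real.log (π₁ * gaussDensity (x i) μ₁ S₁ + π₂ * gaussDensity (x i) μ₂ S₂))
    - w₁ * gaussKL μ₁ S₁ μ₂ S₂ - w₂ * gaussKL μ₂ S₂ μ₁ S₁

/-! Since `det Σ₁ ≤ det Σ₂`, both component densities are at most `(2π)^{-p/2} (det Σ₁)^{-1/2}`,
so the log-likelihood is `-(n/2) log det Σ₁` up to a constant and blows up as `det Σ₁ → 0`.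
The penalty `w₂ KL(N(μ₂,Σ₂), N(μ₁,Σ₁))` compensates: as `Σ₂ ≥ δ`, it is at least
`(w₂/2)(log det Σ₁ + δ tr Σ₁⁻¹)` up to a constant, and `-α log det S - β tr S⁻¹` is bounded above
for `α, β > 0` (apply `log det ≤ tr - p` to `(β/α) S⁻¹`). The other penalty is nonnegative by
Gibbs' inequality, and `log det Σ₂ ≤ p log c`. -/

namespace Matrix

variable {ι : Type*} [Fintype ι] [DecidableEq ι]

section RCLike

variable {𝕜 : Type*} [RCLike 𝕜]
open scoped ComplexOrder MatrixOrder

theorem PosSemidef.trace_mul_nonneg {A B : Matrix ι ι 𝕜} (hA : A.PosSemidef)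
    (hB : B.PosSemidef) : 0 ≤ (A * B).trace := by
  obtain ⟨C, rfl⟩ := CStarAlgebra.nonneg_iff_eq_star_mul_self.mp hB.nonneg
  rw [← Matrix.mul_assoc, Matrix.trace_mul_cycle]
  exact (hA.mul_mul_conjTranspose_same C).trace_nonneg

theorem IsHermitian.posSemidef_sub_smul_one_of_le_eigenvalues {A : Matrix ι ι 𝕜}
    (hA : A.IsHermitian) {δ : ℝ} (h : ∀ i, δ ≤ hA.eigenvalues i) :
    (A - δ • 1).PosSemidef := by
  have : algebraMap ℝ (Matrix ι ι 𝕜) δ ≤ A := by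
    rw [algebraMap_le_iff_le_spectrum hA.isSelfAdjoint, hA.spectrum_real_eq_range_eigenvalues]
    rintro _ ⟨i, rfl⟩
    exact h i
  rwa [Algebra.algebraMap_eq_smul_one] at this

end RCLike

open scoped MatrixOrder

theorem PosDef.log_det_le_trace_sub_card {A : Matrix ι ι ℝ} (hA : A.PosDef) :
    log A.det ≤ A.trace - Fintype.card ι := by
  have hpos := hA.eigenvalues_pos
  rw [hA.1.det_eq_prod_eigenvalues, hA.1.trace_eq_sum_eigenvalues]
  simp only [RCLike.ofReal_real_eq_id, id]
  rw [log_prod fun i _ => (hpos i).ne', Fintype.card_eq_sum_ones, Nat.cast_sum, Nat.cast_one,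
    ← Finset.sum_sub_distrib]
  exact Finset.sum_le_sum fun i _ => log_le_sub_one_of_pos (hpos i)

theorem PosDef.log_det_le_card_mul_log_of_eigenvalues_le {A : Matrix ι ι ℝ} (hA : A.PosDef) {c : ℝ}
    (h : ∀ i, hA.1.eigenvalues i ≤ c) : log A.det ≤ Fintype.card ι * log c := by
  have hpos := hA.eigenvalues_pos
  rw [hA.1.det_eq_prod_eigenvalues]
  simp only [RCLike.ofReal_real_eq_id, id]
  rw [log_prod fun i _ => (hpos i).ne', ← nsmul_eq_mul, ← Finset.card_univ]
  exact Finset.sum_le_card_nsmul _ _ _ fun i _ => log_le_log (hpos i) (h i)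

theorem PosDef.log_det_div_le_trace_inv_mul {A B : Matrix ι ι ℝ} (hA : A.PosDef)
    (hB : B.PosDef) : log (A.det / B.det) ≤ (B⁻¹ * A).trace - Fintype.card ι := by
  obtain ⟨C, hC, rfl⟩ :=
    CStarAlgebra.isStrictlyPositive_iff_eq_star_mul_self.mp (isStrictlyPositive_iff_posDef.mpr hA)
  have hCBC : (C * B⁻¹ * star C).PosDef :=
    (IsUnit.posDef_star_right_conjugate_iff hC).mpr hB.inv
  convert hCBC.log_det_le_trace_sub_card using 2
  · rw [det_mul, det_mul, det_mul, det_nonsing_inv, Ring.inverse_eq_inv, div_eq_mul_inv]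
    ring
  · rw [trace_mul_comm B⁻¹, trace_mul_cycle C]

theorem PosDef.neg_mul_log_det_sub_mul_trace_inv_le {S : Matrix ι ι ℝ} (hS : S.PosDef)
    {α β : ℝ} (hα : 0 < α) (hβ : 0 < β) :
    -α * log S.det - β * S⁻¹.trace ≤ α * Fintype.card ι * (log (α / β) - 1) := by
  have hr : 0 < β / α := div_pos hβ hα
  have h := (PosDef.one.smul hr).log_det_div_le_trace_inv_mul hS
  rw [det_smul, det_one, mul_one, Matrix.mul_smul, Matrix.mul_one, trace_smul, smul_eq_mul,
    log_div (by positivity) hS.det_pos.ne', log_pow] at h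
  have hlog : log (α / β) = -log (β / α) := by rw [← log_inv, inv_div]
  have hscale : α * (β / α * S⁻¹.trace) = β * S⁻¹.trace := by field_simp
  rw [hlog]
  linarith [mul_le_mul_of_nonneg_left h hα.le]

end Matrix

section Gaussian

variable {p : ℕ} {S S₁ S₂ : Matrix (Fin p) (Fin p) ℝ}

theorem gaussDensity_pos (x μ : Fin p → ℝ) (hS : S.PosDef) : 0 < gaussDensity x μ S := by
  have := hS.det_pos
  unfold gaussDensity
  positivity

theorem gaussDensity_le (x μ : Fin p → ℝ) (hS : S.PosDef) :
    gaussDensity x μ S ≤ (2 * π) ^ (-(p : ℝ) / 2) * S.det ^ (-(1 : ℝ) / 2) := by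
  have hq : 0 ≤ (x - μ) ⬝ᵥ (S⁻¹ *ᵥ (x - μ)) := by
    simpa using hS.inv.posSemidef.dotProduct_mulVec_nonneg (x - μ)
  have := hS.det_pos
  unfold gaussDensity
  exact mul_le_of_le_one_right (by positivity) (exp_le_one_iff.mpr (by linarith))

theorem log_mixture_gaussDensity_le (x μ₁ μ₂ : Fin p → ℝ) {π₁ π₂ : ℝ} (hπ₁ : 0 ≤ π₁)
    (hπ₂ : 0 ≤ π₂) (hπ : π₁ + π₂ = 1) (hS₁ : S₁.PosDef) (hS₂ : S₂.PosDef)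
    (hdet : S₁.det ≤ S₂.det) :
    log (π₁ * gaussDensity x μ₁ S₁ + π₂ * gaussDensity x μ₂ S₂) ≤
      -(p / 2) * log (2 * π) - log S₁.det / 2 := by
  set C := (2 * π) ^ (-(p : ℝ) / 2) * S₁.det ^ (-(1 : ℝ) / 2)
  have hd₁ := hS₁.det_pos
  have h₁ : gaussDensity x μ₁ S₁ ≤ C := gaussDensity_le x μ₁ hS₁
  have h₂ : gaussDensity x μ₂ S₂ ≤ C := (gaussDensity_le x μ₂ hS₂).trans <|
    mul_le_mul_of_nonneg_left (rpow_le_rpow_of_nonpos hd₁ hdet (by norm_num)) (by positivity)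
  have hpos : 0 < π₁ * gaussDensity x μ₁ S₁ + π₂ * gaussDensity x μ₂ S₂ :=
    convex_Ioi (0 : ℝ) (gaussDensity_pos x μ₁ hS₁) (gaussDensity_pos x μ₂ hS₂) hπ₁ hπ₂ hπ
  have hle : π₁ * gaussDensity x μ₁ S₁ + π₂ * gaussDensity x μ₂ S₂ ≤ C :=
    convex_Iic C h₁ h₂ hπ₁ hπ₂ hπ
  calc log (π₁ * gaussDensity x μ₁ S₁ + π₂ * gaussDensity x μ₂ S₂) ≤ log C :=
        log_le_log hpos hle
    _ = -(p / 2) * log (2 * π) - log S₁.det / 2 := by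
        rw [log_mul (by positivity) (by positivity), log_rpow (by positivity), log_rpow hd₁]
        ring

theorem gaussKL_nonneg (μ₁ μ₂ : Fin p → ℝ) (hS₁ : S₁.PosDef) (hS₂ : S₂.PosDef) :
    0 ≤ gaussKL μ₁ S₁ μ₂ S₂ := by
  have hlog := hS₁.log_det_div_le_trace_inv_mul hS₂
  have hq : 0 ≤ (μ₂ - μ₁) ⬝ᵥ (S₂⁻¹ *ᵥ (μ₂ - μ₁)) := by
    simpa using hS₂.inv.posSemidef.dotProduct_mulVec_nonneg (μ₂ - μ₁)
  rw [log_div hS₁.det_pos.ne' hS₂.det_pos.ne', Fintype.card_fin] at hlog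
  rw [gaussKL, log_div hS₂.det_pos.ne' hS₁.det_pos.ne']
  linarith

theorem gaussKL_ge_of_le_eigenvalues (μ₁ μ₂ : Fin p → ℝ) (hS₁ : S₁.PosDef) (hS₂ : S₂.PosDef)
    {δ : ℝ} (hδ : ∀ i, δ ≤ hS₁.1.eigenvalues i) :
    (log S₂.det - log S₁.det - p + δ * S₂⁻¹.trace) / 2 ≤ gaussKL μ₁ S₁ μ₂ S₂ := by
  have htr : δ * S₂⁻¹.trace ≤ (S₂⁻¹ * S₁).trace := by
    have h := hS₂.inv.posSemidef.trace_mul_nonneg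
      (hS₁.1.posSemidef_sub_smul_one_of_le_eigenvalues hδ)
    rwa [Matrix.mul_sub, Matrix.mul_smul, Matrix.mul_one, trace_sub, trace_smul, smul_eq_mul,
      sub_nonneg] at h
  have hq : 0 ≤ (μ₂ - μ₁) ⬝ᵥ (S₂⁻¹ *ᵥ (μ₂ - μ₁)) := by
    simpa using hS₂.inv.posSemidef.dotProduct_mulVec_nonneg (μ₂ - μ₁)
  rw [gaussKL, log_div hS₂.det_pos.ne' hS₁.det_pos.ne']
  linarith

end Gaussian

theorem sia_objective_bounded_general (p n : ℕ)
    (w₁ w₂ δ c : ℝ) (hw₁ : 0 ≤ w₁) (hw₂ : 0 < w₂) (hδ : 0 < δ) :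
    ∃ B : ℝ, ∀ (x : Fin n → Fin p → ℝ) (π₁ π₂ : ℝ), 0 ≤ π₁ → 0 ≤ π₂ → π₁ + π₂ = 1 →
      ∀ (μ₁ μ₂ : Fin p → ℝ) (S₁ S₂ : Matrix (Fin p) (Fin p) ℝ)
        (hS₁ : S₁.PosDef) (hS₂ : S₂.PosDef),
        S₁.det ≤ S₂.det →
        (∀ i, hS₁.1.eigenvalues i ≤ c) →
        (∀ i, hS₂.1.eigenvalues i ≤ c) →
        (∀ i, δ ≤ hS₂.1.eigenvalues i) →
        siaObj x π₁ π₂ μ₁ μ₂ S₁ S₂ w₁ w₂ ≤ B := by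
  refine ⟨n * (-(p / 2) * log (2 * π)) + (n + w₂) / 2 * p * (log ((n + w₂) / (w₂ * δ)) - 1)
      + w₂ / 2 * (p * log c + p),
    fun x π₁ π₂ hπ₁ hπ₂ hπ μ₁ μ₂ S₁ S₂ hS₁ hS₂ hdet _ h₂c h₂δ => ?_⟩
  have hloglik : ∑ i, log (π₁ * gaussDensity (x i) μ₁ S₁ + π₂ * gaussDensity (x i) μ₂ S₂) ≤
      n * (-(p / 2) * log (2 * π) - log S₁.det / 2) := by
    simpa using Finset.sum_le_card_nsmul Finset.univ _ _ fun i _ =>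
      log_mixture_gaussDensity_le (x i) μ₁ μ₂ hπ₁ hπ₂ hπ hS₁ hS₂ hdet
  have hKL₁₂ := gaussKL_nonneg μ₁ μ₂ hS₁ hS₂
  have hKL₂₁ := gaussKL_ge_of_le_eigenvalues μ₂ μ₁ hS₂ hS₁ h₂δ
  have hbarrier := hS₁.neg_mul_log_det_sub_mul_trace_inv_le
    (α := (n + w₂) / 2) (β := w₂ * δ / 2) (by positivity) (by positivity)
  have hdet₂ := hS₂.log_det_le_card_mul_log_of_eigenvalues_le h₂c
  rw [Fintype.card_fin, div_div_div_cancel_right₀ two_ne_zero] at hbarrier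
  rw [Fintype.card_fin] at hdet₂
  rw [siaObj]
  linarith [mul_nonneg hw₁ hKL₁₂, mul_le_mul_of_nonneg_left hKL₂₁ hw₂.le,
    mul_le_mul_of_nonneg_left hdet₂ hw₂.le]

theorem sia_objective_bounded (p n : ℕ) (hp : 1 ≤ p) (hn : 1 ≤ n)
    (w₁ w₂ δ c : ℝ) (hw₁ : 0 ≤ w₁) (hw₂ : 0 < w₂) (hδ : 0 < δ) (hδc : δ ≤ c) :
    ∃ B : ℝ, ∀ (x : Fin n → Fin p → ℝ) (π₁ π₂ : ℝ), 0 ≤ π₁ → 0 ≤ π₂ → π₁ + π₂ = 1 →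
      ∀ (μ₁ μ₂ : Fin p → ℝ) (S₁ S₂ : Matrix (Fin p) (Fin p) ℝ)
        (hS₁ : S₁.PosDef) (hS₂ : S₂.PosDef),
        S₁.det ≤ S₂.det →
        (∀ i, hS₁.1.eigenvalues i ≤ c) →
        (∀ i, hS₂.1.eigenvalues i ≤ c) →
        (∀ i, δ ≤ hS₂.1.eigenvalues i) →
        siaObj x π₁ π₂ μ₁ μ₂ S₁ S₂ w₁ w₂ ≤ B :=
  sia_objective_bounded_general p n w₁ w₂ δ c hw₁ hw₂ hδ
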